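/- For all natural numbers n, the sum over k from 0 to n of C(n,k)^3 * (1 + 3*(n - 2k) * H_k) equals (-1)^n. -/

import Mathlib

/-!
Creative telescoping (Wilf–Zeilberger). For the summand `F n k` there is a certificate `G n k`,
rational in `n`, `k` and linear in `H_k`, with
`(n+1) F n k + (2n+3) F (n+1) k + (n+2) F (n+2) k = G n (k+1) - G n k` for every `k`
and `G n 0 = G n (n+3) = 0`. Summing over `k`, the sums `S n` obey
`(n+1) S n + (2n+3) S (n+1) + (n+2) S (n+2) = 0`, a recurrence also satisfied by `(-1)^n`,
and the initial values `S 0 = 1`, `S 1 = -1` match.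
-/

open Finset

def harmonicQ (m : Nat) : ℚ := ∑ j ∈ Finset.range m, (1 : ℚ) / (j + 1)

theorem harmonicQ_zero : harmonicQ 0 = 0 := by
  simp [harmonicQ]

theorem harmonicQ_succ (k : ℕ) : harmonicQ (k + 1) = harmonicQ k + 1 / ((k : ℚ) + 1) := by
  simp [harmonicQ, sum_range_succ]

section Choose

variable {R : Type*} [CommRing R]

theorem Nat.cast_choose_mul_succ (m k : ℕ) :
    (m.choose k : R) * (m + 1) = ((m + 1).choose k : R) * ((m : R) + 1 - k) := by
  rcases le_or_gt k (m + 1) with hk | hk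
  · have := congrArg (Nat.cast : ℕ → R) (Nat.choose_mul_succ_eq m k)
    push_cast [Nat.cast_sub hk] at this
    exact this
  · simp [Nat.choose_eq_zero_of_lt hk, Nat.choose_eq_zero_of_lt (by omega : m < k)]

theorem Nat.cast_choose_succ_right_mul (m k : ℕ) :
    (m.choose (k + 1) : R) * (k + 1) = (m.choose k : R) * ((m : R) - k) := by
  rcases le_or_gt k m with hk | hk
  · have := congrArg (Nat.cast : ℕ → R) (Nat.choose_succ_right_eq m k)
    push_cast [Nat.cast_sub hk] at this
    exact this
  · simp [Nat.choose_eq_zero_of_lt hk, Nat.choose_eq_zero_of_lt (by omega : m < k + 1)]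

end Choose

section Certificate

variable {R : Type*} [CommRing R]

-- Found by Zeilberger's algorithm.
def certCoeffH (x y : R) : R :=
  (3+3*x)*y^7 - (24+39*x+15*x^2)*y^6 + (72+162*x+117*x^2+27*x^3)*y^5
    - (102+297*x+315*x^2+144*x^3+24*x^4)*y^4
    + (72+264*x+378*x^2+264*x^3+90*x^4+12*x^5)*y^3

def certCoeffOne (x y : R) : R :=
  -(2+2*x)*y^6 + (18+30*x+12*x^2)*y^5 - (63+147*x+111*x^2+27*x^3)*y^4
    + (104+312*x+342*x^2+162*x^3+28*x^4)*y^3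
    - (72+264*x+378*x^2+264*x^3+90*x^4+12*x^5)*y^2

theorem certCoeffH_zero_right (x : R) : certCoeffH x 0 = 0 := by
  simp [certCoeffH]

theorem certCoeffOne_zero_right (x : R) : certCoeffOne x 0 = 0 := by
  simp [certCoeffOne]

end Certificate

-- `x = n`, `y = k`, `h = H_k`, `c = C(n+2,k)`: every binomial in the recurrence is a rational
-- multiple of `c`.
theorem wz_rational_identity {K : Type*} [Field K] (x y h c : K)
    (hx1 : x + 1 ≠ 0) (hx2 : x + 2 ≠ 0) (hy : y + 1 ≠ 0) :
    (x + 1) * (c * (x + 2 - y) * (x + 1 - y) / ((x + 1) * (x + 2))) ^ 3 * (1 + 3 * (x - 2 * y) * h)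
      + (2 * x + 3) * (c * (x + 2 - y) / (x + 2)) ^ 3 * (1 + 3 * (x + 1 - 2 * y) * h)
      + (x + 2) * c ^ 3 * (1 + 3 * (x + 2 - 2 * y) * h)
      = (c * (x + 2 - y) / (y + 1)) ^ 3
          * (certCoeffOne x (y + 1) + certCoeffH x (y + 1) * (h + 1 / (y + 1)))
          / ((x + 1) ^ 3 * (x + 2) ^ 3)
        - c ^ 3 * (certCoeffOne x y + certCoeffH x y * h) / ((x + 1) ^ 3 * (x + 2) ^ 3) := by
  field_simp
  simp only [certCoeffH, certCoeffOne]
  ring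

def summand (n k : ℕ) : ℚ := (n.choose k : ℚ) ^ 3 * (1 + 3 * ((n : ℚ) - 2 * k) * harmonicQ k)

def certificate (n k : ℕ) : ℚ :=
  ((n + 2).choose k : ℚ) ^ 3 * (certCoeffOne (n : ℚ) k + certCoeffH (n : ℚ) k * harmonicQ k)
    / (((n : ℚ) + 1) ^ 3 * ((n : ℚ) + 2) ^ 3)

theorem summand_recurrence_eq_certificate_sub (n k : ℕ) :
    ((n : ℚ) + 1) * summand n k + (2 * (n : ℚ) + 3) * summand (n + 1) k
        + ((n : ℚ) + 2) * summand (n + 2) k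
      = certificate n (k + 1) - certificate n k := by
  have hn1 : (n : ℚ) + 1 ≠ 0 := by positivity
  have hn2 : (n : ℚ) + 2 ≠ 0 := by positivity
  have hk1 : (k : ℚ) + 1 ≠ 0 := by positivity
  set c : ℚ := ((n + 2).choose k : ℚ)
  have h1 : ((n + 1).choose k : ℚ) = c * (n + 2 - k) / (n + 2) := by
    rw [eq_div_iff hn2]
    have := Nat.cast_choose_mul_succ (R := ℚ) (n + 1) k
    push_cast at this
    linear_combination this
  have h0 : (n.choose k : ℚ) = c * (n + 2 - k) * (n + 1 - k) / ((n + 1) * (n + 2)) := by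
    rw [eq_div_iff (mul_ne_zero hn1 hn2)]
    have := Nat.cast_choose_mul_succ (R := ℚ) n k
    rw [h1] at this
    field_simp at this
    linear_combination this
  have h2 : ((n + 2).choose (k + 1) : ℚ) = c * (n + 2 - k) / (k + 1) := by
    rw [eq_div_iff hk1]
    have := Nat.cast_choose_succ_right_mul (R := ℚ) (n + 2) k
    push_cast at this
    linear_combination this
  simp only [summand, certificate, h0, h1, h2, harmonicQ_succ]
  push_cast
  convert wz_rational_identity (n : ℚ) k (harmonicQ k) c hn1 hn2 hk1 using 2 <;> ring

theorem sum_range_summand_eq_of_le {n K : ℕ} (h : n + 1 ≤ K) :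
    ∑ k ∈ range K, summand n k = ∑ k ∈ range (n + 1), summand n k := by
  refine (sum_subset (range_subset_range.2 h) fun k _ hk => ?_).symm
  simp [summand, Nat.choose_eq_zero_of_lt (show n < k by simpa using hk)]

theorem certificate_zero_right (n : ℕ) : certificate n 0 = 0 := by
  simp [certificate, certCoeffOne_zero_right, certCoeffH_zero_right]

theorem certificate_top (n : ℕ) : certificate n (n + 3) = 0 := by
  simp [certificate]

theorem sum_summand_recurrence (n : ℕ) :
    ((n : ℚ) + 1) * ∑ k ∈ range (n + 1), summand n k
        + (2 * (n : ℚ) + 3) * ∑ k ∈ range (n + 2), summand (n + 1) k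
        + ((n : ℚ) + 2) * ∑ k ∈ range (n + 3), summand (n + 2) k = 0 := by
  rw [← sum_range_summand_eq_of_le (K := n + 3) (by omega),
    ← sum_range_summand_eq_of_le (n := n + 1) (K := n + 3) (by omega),
    mul_sum, mul_sum, mul_sum, ← sum_add_distrib, ← sum_add_distrib]
  simp only [summand_recurrence_eq_certificate_sub]
  rw [sum_range_sub, certificate_top, certificate_zero_right, sub_zero]

theorem sum_summand_eq_neg_one_pow (n : ℕ) :
    ∑ k ∈ range (n + 1), summand n k = (-1) ^ n := by
  induction n using Nat.twoStepInduction with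
  | zero => simp [summand, harmonicQ_zero]
  | one => norm_num [sum_range_succ, summand, harmonicQ_succ, harmonicQ_zero]
  | more n ih0 ih1 =>
    have hrec := sum_summand_recurrence n
    rw [ih0, ih1] at hrec
    have hn2 : (n : ℚ) + 2 ≠ 0 := by positivity
    apply mul_left_cancel₀ hn2
    linear_combination hrec

theorem stmt12 (n : ℕ) :
    ∑ k ∈ range (n + 1), (n.choose k : ℚ) ^ 3 * (1 + 3 * ((n : ℚ) - 2 * k) * harmonicQ k) = (-1) ^ n := by
  exact sum_summand_eq_neg_one_pow n
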